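/- Let p = p(θ₀) for some θ₀ ∈ Θ, let C ⊆ Θ be compact with inf_{θ ∈ Θ∖C} HD(p,θ) > HD(p,θ*) for some θ* ∈ C, and suppose θ₀ is the unique global minimizer of HD(p,·) over Θ. Assume θ ↦ p_k(θ) is continuous on C for each k. If (q_n) ⊆ Γ satisfies q_{n,k} → p_k(θ₀) as n → ∞ for every k, then for all sufficiently large n the map θ ↦ HD(q_n,θ) attains a global minimum over Θ, and any sequence of such global minimizers converges to θ₀. (This is the pathwise statement underlying the strong consistency of the minimum Hellinger distance estimator.) -/

import Mathlib

open Filter Topology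

/-- `q` is a probability distribution on the nonnegative integers. -/
def IsDistrib (q : ℕ → ℝ) : Prop := (∀ k, 0 ≤ q k) ∧ HasSum q 1

/-- The squared Hellinger distance `HD(q,θ) = Σ_k (q_k^{1/2} - p_k(θ)^{1/2})²`. -/
noncomputable def HDdist (p : ℝ → ℕ → ℝ) (q : ℕ → ℝ) (θ : ℝ) : ℝ :=
  ∑' k, (Real.sqrt (q k) - Real.sqrt (p θ k))^2

/-! Minimum Hellinger distance estimation is an M-estimation problem whose criteria
`HD(q_n, ·)` converge to `HD(p, ·)` uniformly on `Θ`: by Cauchy–Schwarz in `ℓ²`,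
`|HD(q, θ) - HD(q', θ)| ≤ 2 HD(q, q')^{1/2}`, and `HD(q_n, p) ≤ Σ_k |q_{n,k} - p_k| → 0` by
Scheffé's lemma. The same two facts make `HD(q, ·)` continuous on `C`. Compactness of `C` and
the separation condition turn the unique minimizer `θ₀` of `HD(p, ·)` into a well-separated
one, and then the usual argmin argument applies: minimizers of a uniformly close criterion
exist (on `C`) and cannot stay outside a neighbourhood of `θ₀`. -/

theorem sq_sqrt_sub_sqrt_le_abs_sub {a b : ℝ} (ha : 0 ≤ a) (hb : 0 ≤ b) :
    (√a - √b) ^ 2 ≤ |a - b| := by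
  have hab : (√a - √b) * (√a + √b) = a - b := by
    linear_combination Real.sq_sqrt ha - Real.sq_sqrt hb
  have hsum : 0 ≤ √a + √b := by positivity
  calc (√a - √b) ^ 2 = |√a - √b| * |√a - √b| := by rw [← sq, sq_abs]
    _ ≤ |√a - √b| * (√a + √b) := by
      gcongr
      exact abs_sub_le_iff.2 ⟨by linarith [Real.sqrt_nonneg b], by linarith [Real.sqrt_nonneg a]⟩
    _ = |a - b| := by rw [← hab, abs_mul, abs_of_nonneg hsum]

theorem summable_and_abs_tsum_mul_le {ι : Type*} {x y : ι → ℝ}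
    (hx : Summable fun i => x i ^ 2) (hy : Summable fun i => y i ^ 2) :
    (Summable fun i => x i * y i) ∧
      |∑' i, x i * y i| ≤ √(∑' i, x i ^ 2) * √(∑' i, y i ^ 2) := by
  have hsq : ∀ z : ι → ℝ, (fun i => |z i| ^ (2 : ℝ)) = fun i => z i ^ 2 := fun z =>
    funext fun i => by rw [Real.rpow_two, sq_abs]
  obtain ⟨hs, hle⟩ := Real.summable_and_inner_le_Lp_mul_Lq_tsum_of_nonneg
    Real.HolderConjugate.two_two (fun i => abs_nonneg (x i)) (fun i => abs_nonneg (y i))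
    (hsq x ▸ hx) (hsq y ▸ hy)
  simp only [hsq, ← abs_mul] at hs hle
  refine ⟨hs.of_abs, ?_⟩
  calc |∑' i, x i * y i| ≤ ∑' i, |x i * y i| := by
        simpa only [Real.norm_eq_abs] using norm_tsum_le_tsum_norm (f := fun i => x i * y i) hs
    _ ≤ √(∑' i, x i ^ 2) * √(∑' i, y i ^ 2) := by
        rwa [Real.sqrt_eq_rpow, Real.sqrt_eq_rpow]

theorem summable_sq_sqrt_sub_sqrt {ι : Type*} {q r : ι → ℝ} (hq0 : ∀ k, 0 ≤ q k)
    (hr0 : ∀ k, 0 ≤ r k) (hq : Summable q) (hr : Summable r) :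
    Summable fun k => (√(q k) - √(r k)) ^ 2 :=
  .of_nonneg_of_le (fun _ => sq_nonneg _) (fun k => sq_sqrt_sub_sqrt_le_abs_sub (hq0 k) (hr0 k))
    (hq.sub hr).abs

-- `HDdist p q θ` unfolds to `sqHellinger q (p θ)`.
noncomputable def sqHellinger (q r : ℕ → ℝ) : ℝ :=
  ∑' k, (√(q k) - √(r k)) ^ 2

theorem sqHellinger_comm (q r : ℕ → ℝ) : sqHellinger q r = sqHellinger r q :=
  tsum_congr fun k => by ring

theorem abs_sqHellinger_sub_le {q q' r : ℕ → ℝ} (hq : IsDistrib q) (hq' : IsDistrib q')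
    (hr : IsDistrib r) : |sqHellinger q r - sqHellinger q' r| ≤ 2 * √(sqHellinger q q') := by
  obtain ⟨hq0, hq1⟩ := hq
  obtain ⟨hq'0, hq'1⟩ := hq'
  obtain ⟨hr0, hr1⟩ := hr
  have hr2 : (fun k => √(r k) ^ 2) = r := funext fun k => Real.sq_sqrt (hr0 k)
  obtain ⟨hprod, hCS⟩ := summable_and_abs_tsum_mul_le
    (summable_sq_sqrt_sub_sqrt hq0 hq'0 hq1.summable hq'1.summable) (hr2 ▸ hr1.summable)
  have hpt : ∀ k, (√(q k) - √(r k)) ^ 2 - (√(q' k) - √(r k)) ^ 2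
      = q k - q' k - 2 * ((√(q k) - √(q' k)) * √(r k)) := fun k => by
    linear_combination Real.sq_sqrt (hq0 k) - Real.sq_sqrt (hq'0 k)
  rw [sqHellinger, sqHellinger, ← (summable_sq_sqrt_sub_sqrt hq0 hr0 hq1.summable
    hr1.summable).tsum_sub (summable_sq_sqrt_sub_sqrt hq'0 hr0 hq'1.summable hr1.summable),
    tsum_congr hpt, ((hq1.sub hq'1).sub (hprod.hasSum.mul_left 2)).tsum_eq,
    sub_self, zero_sub, abs_neg, abs_mul, abs_two]
  rw [hr2, hr1.tsum_eq, Real.sqrt_one, mul_one] at hCS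
  exact mul_le_mul_of_nonneg_left hCS zero_le_two

theorem tendsto_tsum_abs_sub_of_tendsto {ι : Type*} {l : Filter ι} {q : ι → ℕ → ℝ}
    {r : ℕ → ℝ} (hq : ∀ᶠ i in l, IsDistrib (q i)) (hr : IsDistrib r)
    (hconv : ∀ k, Tendsto (fun i => q i k) l (𝓝 (r k))) :
    Tendsto (fun i => ∑' k, |q i k - r k|) l (𝓝 0) := by
  -- Equal total masses make the `ℓ¹` distance twice the deficit `∑ (r - q)⁺`, dominated by `r`.
  have hbound : ∀ᶠ i in l, ∀ k, max (r k - q i k) 0 ≤ r k := by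
    filter_upwards [hq] with i hi k
    exact max_le (by linarith [hi.1 k]) (hr.1 k)
  have hdeficit : Tendsto (fun i => ∑' k, max (r k - q i k) 0) l (𝓝 0) := by
    have hpointwise : ∀ k, Tendsto (fun i => max (r k - q i k) 0) l (𝓝 0) := fun k => by
      simpa using ((tendsto_const_nhds (x := r k)).sub (hconv k)).max
        (tendsto_const_nhds (x := (0 : ℝ)))
    have hdom : ∀ᶠ i in l, ∀ k, ‖max (r k - q i k) 0‖ ≤ r k := by
      filter_upwards [hbound] with i hi k
      rw [Real.norm_eq_abs, abs_of_nonneg (le_max_right _ _)]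
      exact hi k
    simpa using tendsto_tsum_of_dominated_convergence hr.2.summable hpointwise hdom
  have hmass : ∀ᶠ i in l, 2 * ∑' k, max (r k - q i k) 0 = ∑' k, |q i k - r k| := by
    filter_upwards [hq, hbound] with i hi hbi
    have hs : Summable fun k => max (r k - q i k) 0 :=
      .of_nonneg_of_le (fun _ => le_max_right _ _) hbi hr.2.summable
    have habs : ∀ k, |q i k - r k| = (q i k - r k) + 2 * max (r k - q i k) 0 := by
      intro k
      rcases le_total (q i k) (r k) with h | h
      · rw [abs_of_nonpos (by linarith), max_eq_left (by linarith)]; ring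
      · rw [abs_of_nonneg (by linarith), max_eq_right (by linarith)]; ring
    rw [funext habs, ((hi.2.sub hr.2).add (hs.hasSum.mul_left 2)).tsum_eq]
    ring
  simpa using (hdeficit.const_mul 2).congr' hmass

theorem tendsto_sqHellinger_of_tendsto {ι : Type*} {l : Filter ι} {q : ι → ℕ → ℝ}
    {r : ℕ → ℝ} (hq : ∀ᶠ i in l, IsDistrib (q i)) (hr : IsDistrib r)
    (hconv : ∀ k, Tendsto (fun i => q i k) l (𝓝 (r k))) :
    Tendsto (fun i => sqHellinger (q i) r) l (𝓝 0) := by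
  refine squeeze_zero' (.of_forall fun i => tsum_nonneg fun k => sq_nonneg _) ?_
    (tendsto_tsum_abs_sub_of_tendsto hq hr hconv)
  filter_upwards [hq] with i hi
  exact Summable.tsum_le_tsum (fun k => sq_sqrt_sub_sqrt_le_abs_sub (hi.1 k) (hr.1 k))
    (summable_sq_sqrt_sub_sqrt hi.1 hr.1 hi.2.summable hr.2.summable)
    (hi.2.summable.sub hr.2.summable).abs

theorem tendstoUniformlyOn_HDdist {ι : Type*} {l : Filter ι} {p : ℝ → ℕ → ℝ}
    {q : ι → ℕ → ℝ} {r : ℕ → ℝ} {Θ : Set ℝ} (hp : ∀ θ ∈ Θ, IsDistrib (p θ))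
    (hq : ∀ᶠ i in l, IsDistrib (q i)) (hr : IsDistrib r)
    (hconv : ∀ k, Tendsto (fun i => q i k) l (𝓝 (r k))) :
    TendstoUniformlyOn (fun i => HDdist p (q i)) (HDdist p r) l Θ := by
  have hlim : Tendsto (fun i => 2 * √(sqHellinger (q i) r)) l (𝓝 0) := by
    simpa using (tendsto_sqHellinger_of_tendsto hq hr hconv).sqrt.const_mul 2
  rw [Metric.tendstoUniformlyOn_iff]
  intro ε hε
  filter_upwards [hq, hlim.eventually (gt_mem_nhds hε)] with i hi hiε θ hθ
  rw [Real.dist_eq, abs_sub_comm]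
  exact (abs_sqHellinger_sub_le hi hr (hp θ hθ)).trans_lt hiε

theorem continuousOn_HDdist {p : ℝ → ℕ → ℝ} {q : ℕ → ℝ} {C : Set ℝ}
    (hp : ∀ θ ∈ C, IsDistrib (p θ)) (hq : IsDistrib q)
    (hpcont : ∀ k, ContinuousOn (fun θ => p θ k) C) : ContinuousOn (HDdist p q) C := by
  intro θ hθ
  have hnear : ∀ᶠ θ' in 𝓝[C] θ, IsDistrib (p θ') := eventually_nhdsWithin_of_forall hp
  have hlim : Tendsto (fun θ' => 2 * √(sqHellinger (p θ') (p θ))) (𝓝[C] θ) (𝓝 0) := by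
    simpa using (tendsto_sqHellinger_of_tendsto hnear (hp θ hθ)
      fun k => hpcont k θ hθ).sqrt.const_mul 2
  rw [ContinuousWithinAt, tendsto_iff_dist_tendsto_zero]
  refine squeeze_zero' (.of_forall fun _ => dist_nonneg) ?_ hlim
  filter_upwards [hnear] with θ' hθ'
  have hbound := abs_sqHellinger_sub_le hθ' (hp θ hθ) hq
  rwa [sqHellinger_comm (p θ'), sqHellinger_comm (p θ), ← Real.dist_eq] at hbound

section Argmin

variable {ι X : Type*} [TopologicalSpace X]

def IsWellSeparatedMinOn (f : X → ℝ) (Θ : Set X) (θ₀ : X) : Prop :=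
  ∀ U ∈ 𝓝 θ₀, ∃ δ > 0, ∀ θ ∈ Θ \ U, f θ₀ + δ ≤ f θ

theorem isWellSeparatedMinOn_of_isCompact {f : X → ℝ} {Θ C : Set X} {θ₀ : X} {c : ℝ}
    (hC : IsCompact C) (hCΘ : C ⊆ Θ) (hf : ContinuousOn f C) (hmin : IsMinOn f Θ θ₀)
    (huniq : ∀ θ ∈ Θ, IsMinOn f Θ θ → θ = θ₀) (hc : f θ₀ < c) (hout : ∀ θ ∈ Θ \ C, c ≤ f θ) :
    IsWellSeparatedMinOn f Θ θ₀ := by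
  intro U hU
  have hgt : ∀ θ ∈ C \ interior U, f θ₀ < f θ := by
    rintro θ ⟨hθC, hθU⟩
    by_contra! hle
    have hθmin : IsMinOn f Θ θ :=
      isMinOn_iff.2 fun t ht => hle.trans (isMinOn_iff.1 hmin t ht)
    exact hθU (huniq θ (hCΘ hθC) hθmin ▸ mem_interior_iff_mem_nhds.2 hU)
  obtain ⟨a, hθ₀a, ha⟩ :=
    (hC.diff isOpen_interior).exists_forall_le' (hf.mono Set.sdiff_subset) hgt
  refine ⟨min c a - f θ₀, sub_pos.2 (lt_min hc hθ₀a), fun θ ⟨hθΘ, hθU⟩ => ?_⟩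
  rw [add_sub_cancel]
  by_cases hθC : θ ∈ C
  · exact (min_le_right _ _).trans (ha θ ⟨hθC, fun h => hθU (interior_subset h)⟩)
  · exact (min_le_left _ _).trans (hout θ ⟨hθΘ, hθC⟩)

variable {l : Filter ι} {F : ι → X → ℝ} {f : X → ℝ} {Θ : Set X}

theorem TendstoUniformlyOn.eventually_exists_isMinOn {C : Set X} {θs : X} {c : ℝ}
    (hF : TendstoUniformlyOn F f l Θ) (hFc : ∀ i, ContinuousOn (F i) C) (hC : IsCompact C)
    (hCΘ : C ⊆ Θ) (hθs : θs ∈ C) (hc : f θs < c) (hout : ∀ θ ∈ Θ \ C, c ≤ f θ) :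
    ∀ᶠ i in l, ∃ θ ∈ Θ, IsMinOn (F i) Θ θ := by
  have hε : 0 < (c - f θs) / 2 := by linarith
  filter_upwards [Metric.tendstoUniformlyOn_iff.1 hF _ hε] with i hi
  obtain ⟨θm, hθmC, hθm⟩ := hC.exists_isMinOn ⟨θs, hθs⟩ (hFc i)
  refine ⟨θm, hCΘ hθmC, fun t ht => ?_⟩
  by_cases htC : t ∈ C
  · exact hθm htC
  · have hs := hi θs (hCΘ hθs)
    have ht' := hi t ht
    have := hout t ⟨ht, htC⟩
    rw [Real.dist_eq, abs_lt] at hs ht'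
    exact (isMinOn_iff.1 hθm θs hθs).trans (by linarith)

theorem TendstoUniformlyOn.tendsto_of_isMinOn {θ₀ : X} {θn : ι → X}
    (hF : TendstoUniformlyOn F f l Θ) (hθ₀ : θ₀ ∈ Θ) (hsep : IsWellSeparatedMinOn f Θ θ₀)
    (hθn : ∀ᶠ i in l, θn i ∈ Θ ∧ IsMinOn (F i) Θ (θn i)) :
    Tendsto θn l (𝓝 θ₀) := by
  intro U hU
  obtain ⟨δ, hδ, hfδ⟩ := hsep U hU
  refine Filter.mem_map.2 ?_
  filter_upwards [Metric.tendstoUniformlyOn_iff.1 hF _ (half_pos hδ), hθn]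
    with i hi ⟨hθnΘ, hθnmin⟩
  by_contra hθnU
  have h₀ := hi θ₀ hθ₀
  have hn := hi (θn i) hθnΘ
  have := hfδ (θn i) ⟨hθnΘ, hθnU⟩
  have := isMinOn_iff.1 hθnmin θ₀ hθ₀
  rw [Real.dist_eq, abs_lt] at h₀ hn
  linarith

end Argmin

theorem stmt_6_general
    (Θ : Set ℝ) (p : ℝ → ℕ → ℝ) (C : Set ℝ) (θs θ₀ : ℝ)
    (qn : ℕ → ℕ → ℝ)
    (hp : ∀ θ ∈ Θ, IsDistrib (p θ))
    (hθ₀ : θ₀ ∈ Θ) (hqn : ∀ n, IsDistrib (qn n))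
    (hC : IsCompact C) (hCsub : C ⊆ Θ) (hθs : θs ∈ C)
    (hinf : ∃ c, HDdist p (p θ₀) θs < c ∧ ∀ θ ∈ Θ \ C, c ≤ HDdist p (p θ₀) θ)
    (hθ₀min : ∀ θ ∈ Θ, HDdist p (p θ₀) θ₀ ≤ HDdist p (p θ₀) θ)
    (hθ₀uniq : ∀ θ₁ ∈ Θ,
      (∀ θ ∈ Θ, HDdist p (p θ₀) θ₁ ≤ HDdist p (p θ₀) θ) → θ₁ = θ₀)
    (hpcont : ∀ k, ContinuousOn (fun θ => p θ k) C)
    (hconv : ∀ k, Tendsto (fun n => qn n k) atTop (𝓝 (p θ₀ k))) :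
    (∀ᶠ n in atTop, ∃ θ ∈ Θ, ∀ t ∈ Θ, HDdist p (qn n) θ ≤ HDdist p (qn n) t) ∧
    ∀ θn : ℕ → ℝ,
      (∀ᶠ n in atTop, θn n ∈ Θ ∧
        ∀ t ∈ Θ, HDdist p (qn n) (θn n) ≤ HDdist p (qn n) t) →
      Tendsto θn atTop (𝓝 θ₀) := by
  obtain ⟨c, hθsc, hout⟩ := hinf
  have hpC : ∀ θ ∈ C, IsDistrib (p θ) := fun θ hθ => hp θ (hCsub hθ)
  have hunif := tendstoUniformlyOn_HDdist hp (.of_forall hqn) (hp θ₀ hθ₀) hconv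
  have hsep : IsWellSeparatedMinOn (HDdist p (p θ₀)) Θ θ₀ :=
    isWellSeparatedMinOn_of_isCompact hC hCsub (continuousOn_HDdist hpC (hp θ₀ hθ₀) hpcont)
      hθ₀min hθ₀uniq ((hθ₀min θs (hCsub hθs)).trans_lt hθsc) hout
  refine ⟨hunif.eventually_exists_isMinOn (fun n => continuousOn_HDdist hpC (hqn n) hpcont) hC
    hCsub hθs hθsc hout, fun θn hθn => hunif.tendsto_of_isMinOn hθ₀ hsep hθn⟩

/-- pathwise consistency of the MHDE: if `q_{n,k} → p_k(θ₀)` for every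
`k`, then the minimizers of `HD(q_n,·)` eventually exist and converge to `θ₀`, the
unique global minimizer of `HD(p(θ₀),·)`. -/
theorem stmt_6
    (Θ : Set ℝ) (p : ℝ → ℕ → ℝ) (C : Set ℝ) (θs θ₀ : ℝ)
    (qn : ℕ → ℕ → ℝ)
    (hp : ∀ θ ∈ Θ, IsDistrib (p θ)) (hppos : ∀ θ ∈ Θ, ∀ k, 0 < p θ k)
    (hθ₀ : θ₀ ∈ Θ) (hqn : ∀ n, IsDistrib (qn n))
    (hC : IsCompact C) (hCsub : C ⊆ Θ) (hθs : θs ∈ C)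
    (hinf : ∃ c, HDdist p (p θ₀) θs < c ∧ ∀ θ ∈ Θ \ C, c ≤ HDdist p (p θ₀) θ)
    (hθ₀min : ∀ θ ∈ Θ, HDdist p (p θ₀) θ₀ ≤ HDdist p (p θ₀) θ)
    (hθ₀uniq : ∀ θ₁ ∈ Θ,
      (∀ θ ∈ Θ, HDdist p (p θ₀) θ₁ ≤ HDdist p (p θ₀) θ) → θ₁ = θ₀)
    (hpcont : ∀ k, ContinuousOn (fun θ => p θ k) C)
    (hconv : ∀ k, Tendsto (fun n => qn n k) atTop (𝓝 (p θ₀ k))) :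
    (∀ᶠ n in atTop, ∃ θ ∈ Θ, ∀ t ∈ Θ, HDdist p (qn n) θ ≤ HDdist p (qn n) t) ∧
    ∀ θn : ℕ → ℝ,
      (∀ᶠ n in atTop, θn n ∈ Θ ∧
        ∀ t ∈ Θ, HDdist p (qn n) (θn n) ≤ HDdist p (qn n) t) →
      Tendsto θn atTop (𝓝 θ₀) :=
  stmt_6_general Θ p C θs θ₀ qn hp hθ₀ hqn hC hCsub hθs hinf hθ₀min hθ₀uniq hpcont hconv
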